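/- arXiv:1705.00075 — 8 statements merged into one kernel-verified Lean document; each statement's English description precedes it below -/
import Mathlib

section
/- In a k-geodetic digraph with minimum out-degree at least d, for every vertex u and every 0 ≤ l ≤ k, the number of vertices at distance exactly l from u is at least d^l. -/
open scoped Classical

/-- There is a directed walk of length `n` from `u` to `v` in the digraph with
arc relation `A` (the walk is recorded as its list of `n+1` vertices). -/
def HasWalkLen {V : Type*} (A : V → V → Prop) (n : ℕ) (u v : V) : Prop :=
  ∃ l : List V, l.head? = some u ∧ l.getLast? = some v ∧ l.Chain' A ∧ l.length = n + 1

/-- The distance from `u` to `v` is at most `n`. -/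
def DistLe {V : Type*} (A : V → V → Prop) (n : ℕ) (u v : V) : Prop :=
  ∃ m ≤ n, HasWalkLen A m u v

/-- The distance from `u` to `v` is exactly `n`. -/
def DistEq {V : Type*} (A : V → V → Prop) (n : ℕ) (u v : V) : Prop :=
  HasWalkLen A n u v ∧ ∀ m < n, ¬ HasWalkLen A m u v

/-- A digraph is `k`-geodetic: between any ordered pair of vertices there is at
most one directed path of length at most `k`. -/
def Geodetic {V : Type*} (A : V → V → Prop) (k : ℕ) : Prop :=
  ∀ u v : V, ∀ l₁ l₂ : List V,
    (l₁.head? = some u ∧ l₁.getLast? = some v ∧ l₁.Chain' A ∧ l₁.length ≤ k + 1) →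
    (l₂.head? = some u ∧ l₂.getLast? = some v ∧ l₂.Chain' A ∧ l₂.length ≤ k + 1) →
    l₁ = l₂

/-- Out-neighbourhood. -/
def Nplus {V : Type*} (A : V → V → Prop) (u : V) : Set V := {v | A u v}

/-- Out-degree. -/
noncomputable def outDeg {V : Type*} (A : V → V → Prop) (u : V) : ℕ := {v | A u v}.ncard

/-- In-degree. -/
noncomputable def inDeg {V : Type*} (A : V → V → Prop) (u : V) : ℕ := {v | A v u}.ncard

/-- `T_k(u)`: the set of vertices at distance at most `k` from `u`. -/
def Tset {V : Type*} (A : V → V → Prop) (k : ℕ) (u : V) : Set V := {v | DistLe A k u v}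

/-- `O(u)`: the outliers of `u`, i.e. vertices at distance at least `k+1` from `u`. -/
def Outliers {V : Type*} (A : V → V → Prop) (k : ℕ) (u : V) : Set V := {v | ¬ DistLe A k u v}

/-!
Up to depth `k` the shortest walks from `u` form a tree: appending an arc to a geodesic of length
`l < k` yields the unique walk of length at most `l + 1` to its endpoint. Hence every out-neighbour
of a vertex at distance `l` lies at distance `l + 1`, and a vertex at distance `l + 1` has only one
in-neighbour at distance `l`. Double counting the arcs between the two layers gives
`d · #{distance l} ≤ #{distance l + 1}`.
-/

section Layers

variable {V : Type*} {A : V → V → Prop}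

lemma distEq_zero_self (u : V) : DistEq A 0 u u :=
  ⟨⟨[u], rfl, rfl, List.isChain_singleton u, rfl⟩, fun _ h => (Nat.not_lt_zero _ h).elim⟩

lemma List.walk_append_singleton {L : List V} {u v w : V} (hu : L.head? = some u)
    (hv : L.getLast? = some v) (hL : L.IsChain A) (hvw : A v w) :
    (L ++ [w]).head? = some u ∧ (L ++ [w]).getLast? = some w ∧ (L ++ [w]).IsChain A := by
  refine ⟨by simp [hu], List.getLast?_concat, hL.append (List.isChain_singleton w) ?_⟩
  simp_all

lemma HasWalkLen.snoc {n : ℕ} {u v w : V} (h : HasWalkLen A n u v) (hvw : A v w) :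
    HasWalkLen A (n + 1) u w := by
  obtain ⟨L, hu, hv, hL, hlen⟩ := h
  obtain ⟨hu', hw', hL'⟩ := L.walk_append_singleton hu hv hL hvw
  exact ⟨L ++ [w], hu', hw', hL', by simp [hlen]⟩

section Geodetic

variable {k l : ℕ} (hgeo : Geodetic A k) (hlk : l < k)
include hgeo hlk

lemma DistEq.succ_of_adj {u v w : V} (hv : DistEq A l u v) (hvw : A v w) :
    DistEq A (l + 1) u w := by
  refine ⟨hv.1.snoc hvw, fun m hm ⟨L₁, hu₁, hw₁, hL₁, hlen₁⟩ => ?_⟩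
  obtain ⟨L₂, hu₂, hw₂, hL₂, hlen₂⟩ := hv.1.snoc hvw
  have hL : L₁ = L₂ := hgeo u w L₁ L₂ ⟨hu₁, hw₁, hL₁, by omega⟩ ⟨hu₂, hw₂, hL₂, by omega⟩
  have := congrArg List.length hL
  omega

lemma DistEq.eq_of_adj {u v₁ v₂ w : V} (hv₁ : DistEq A l u v₁) (hv₂ : DistEq A l u v₂)
    (h₁ : A v₁ w) (h₂ : A v₂ w) : v₁ = v₂ := by
  obtain ⟨L₁, hu₁, hlast₁, hL₁, hlen₁⟩ := hv₁.1
  obtain ⟨L₂, hu₂, hlast₂, hL₂, hlen₂⟩ := hv₂.1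
  obtain ⟨hu₁', hw₁, hL₁'⟩ := L₁.walk_append_singleton hu₁ hlast₁ hL₁ h₁
  obtain ⟨hu₂', hw₂, hL₂'⟩ := L₂.walk_append_singleton hu₂ hlast₂ hL₂ h₂
  have hL : L₁ = L₂ := by
    simpa using hgeo u w _ _ ⟨hu₁', hw₁, hL₁', by simp; omega⟩ ⟨hu₂', hw₂, hL₂', by simp; omega⟩
  rw [hL, hlast₂] at hlast₁
  exact (Option.some_injective _ hlast₁).symm

end Geodetic

lemma mul_ncard_distEq_le_ncard_distEq_succ [Fintype V] {d k l : ℕ} (hgeo : Geodetic A k)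
    (hdeg : ∀ v, d ≤ outDeg A v) (hlk : l < k) (u : V) :
    d * {v | DistEq A l u v}.ncard ≤ {w | DistEq A (l + 1) u w}.ncard := by
  simp only [Set.ncard_eq_toFinset_card']
  set S := {v | DistEq A l u v}.toFinset
  set T := {w | DistEq A (l + 1) u w}.toFinset
  have hout : ∀ v ∈ S, d ≤ (T.bipartiteAbove A v).card := fun v hv => by
    refine (hdeg v).trans ?_
    rw [outDeg, Set.ncard_eq_toFinset_card']
    refine Finset.card_le_card fun w hw => ?_
    simp only [Set.mem_toFinset, Set.mem_ofPred_eq, S] at hv hw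
    exact (Finset.mem_bipartiteAbove A).2 ⟨Set.mem_toFinset.2 (hv.succ_of_adj hgeo hlk hw), hw⟩
  have hin : ∀ w ∈ T, (S.bipartiteBelow A w).card ≤ 1 := fun w _ =>
    Finset.card_le_one.2 fun v₁ h₁ v₂ h₂ => by
      simp only [Finset.mem_bipartiteBelow A, Set.mem_toFinset, Set.mem_ofPred_eq, S] at h₁ h₂
      exact h₁.1.eq_of_adj hgeo hlk h₂.1 h₁.2 h₂.2
  simpa [mul_comm] using Finset.card_mul_le_card_mul A hout hin

end Layers

/-- In a `k`-geodetic digraph with minimum out-degree at least `d`, for every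
vertex `u` and every `l ≤ k` there are at least `d^l` vertices at distance
exactly `l` from `u`. -/
theorem stmt_2 {V : Type*} [Fintype V] (A : V → V → Prop) (d k : ℕ)
    (hgeo : Geodetic A k) (hdeg : ∀ u, d ≤ outDeg A u)
    (u : V) (l : ℕ) (hl : l ≤ k) :
    d ^ l ≤ {v | DistEq A l u v}.ncard := by
  induction l with
  | zero => exact (Set.ncard_pos).2 ⟨u, distEq_zero_self u⟩
  | succ l ih =>
    calc d ^ (l + 1) = d * d ^ l := pow_succ' d l
      _ ≤ d * {v | DistEq A l u v}.ncard := Nat.mul_le_mul_left d (ih (by omega))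
      _ ≤ {v | DistEq A (l + 1) u v}.ncard := mul_ncard_distEq_le_ncard_distEq_succ hgeo hdeg hl u
end

section
/- In a diregular (2,k,+2)-digraph, every vertex is an outlier of exactly two vertices; that is, for every vertex w there are exactly two vertices u with w ∈ O(u). -/
open scoped Classical

/-- Walks of length `m` (i.e. `m+1` vertices) ending at `w`. -/
def Wset {V : Type*} (A : V → V → Prop) (w : V) (m : ℕ) : Set (List V) :=
  {l | l.getLast? = some w ∧ l.Chain' A ∧ l.length = m + 1}

lemma Wset_finite {V : Type*} [Fintype V] (A : V → V → Prop) (w : V) (m : ℕ) :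
    (Wset A w m).Finite :=
  (List.finite_length_eq V (m + 1)).subset fun _ hl => hl.2.2

lemma Wset_zero {V : Type*} (A : V → V → Prop) (w : V) :
    Wset A w 0 = {[w]} := by
  ext l
  constructor
  · rintro ⟨h1, _, h3⟩
    match l, h3 with
    | [a], _ =>
      simp only [List.getLast?_singleton, Option.some.injEq] at h1
      simp [h1]
  · rintro rfl
    exact ⟨rfl, List.isChain_singleton w, rfl⟩

lemma mem_Wset_succ {V : Type*} [Inhabited V] (A : V → V → Prop) (w : V) (m : ℕ) (l : List V) :
    l ∈ Wset A w (m + 1) ↔ ∃ x t, l = x :: t ∧ t ∈ Wset A w m ∧ A x t.headI := by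
  constructor
  · rintro ⟨h1, h2, h3⟩
    obtain ⟨x, y, t', rfl⟩ : ∃ x y t', l = x :: y :: t' := by
      rcases l with _ | ⟨x, _ | ⟨y, t'⟩⟩ <;> simp_all
    refine ⟨x, y :: t', rfl, ⟨?_, h2.tail, by simpa using h3⟩, ?_⟩
    · rwa [List.getLast?_cons_cons] at h1
    · exact (List.isChain_cons_cons.mp h2).1
  · rintro ⟨x, t, rfl, ⟨h1, h2, h3⟩, hA⟩
    obtain ⟨y, t', rfl⟩ : ∃ y t', t = y :: t' := by
      rcases t with _ | ⟨y, t'⟩ <;> simp_all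
    exact ⟨by rwa [List.getLast?_cons_cons], List.isChain_cons_cons.mpr ⟨by simpa using hA, h2⟩,
      by simpa using h3⟩

lemma Wset_ncard {V : Type*} [Fintype V] [Inhabited V] (A : V → V → Prop)
    (hdeg : ∀ w, inDeg A w = 2) (w : V) (m : ℕ) :
    (Wset A w m).ncard = 2 ^ m := by
  induction m with
  | zero => simp [Wset_zero]
  | succ m ih =>
    classical
    -- Finset versions
    set Fm := (Wset_finite A w m).toFinset with hFm
    have hFmcard : Fm.card = 2 ^ m := by
      rw [hFm, ← Set.ncard_eq_toFinset_card _ (Wset_finite A w m)]; exact ih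
    set ext : List V → Finset (List V) :=
      fun t => ((Set.toFinite {x | A x t.headI}).toFinset).image (fun x => x :: t) with hext
    have hextcard : ∀ t, (ext t).card = 2 := by
      intro t
      rw [hext]
      rw [Finset.card_image_of_injective _ (fun a b h => by injection h)]
      rw [← Set.ncard_eq_toFinset_card _]
      exact hdeg t.headI
    have hW : (Wset_finite A w (m + 1)).toFinset = Fm.biUnion ext := by
      ext l
      simp only [Set.Finite.mem_toFinset, Finset.mem_biUnion, hFm, hext,
        Finset.mem_image, Set.Finite.mem_toFinset, Set.mem_setOf_eq]
      rw [mem_Wset_succ]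
      constructor
      · rintro ⟨x, t, rfl, ht, hA⟩; exact ⟨t, ht, x, hA, rfl⟩
      · rintro ⟨t, ht, x, hA, rfl⟩; exact ⟨x, t, rfl, ht, hA⟩
    have hdisj : ∀ t₁ ∈ Fm, ∀ t₂ ∈ Fm, t₁ ≠ t₂ → Disjoint (ext t₁) (ext t₂) := by
      intro t₁ _ t₂ _ hne
      rw [Finset.disjoint_left]
      rintro l hl₁ hl₂
      simp only [hext, Finset.mem_image, Set.Finite.mem_toFinset, Set.mem_setOf_eq] at hl₁ hl₂
      obtain ⟨x₁, _, rfl⟩ := hl₁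
      obtain ⟨x₂, _, h⟩ := hl₂
      exact hne (congrArg List.tail h).symm
    rw [Set.ncard_eq_toFinset_card _ (Wset_finite A w (m+1)), hW, Finset.card_biUnion hdisj]
    simp only [hextcard, Finset.sum_const, smul_eq_mul, hFmcard]
    ring

lemma geomsum2 (n : ℕ) : ∑ i ∈ Finset.range n, 2 ^ i = 2 ^ n - 1 := by
  induction n with
  | zero => simp
  | succ n ih =>
    rw [Finset.sum_range_succ, ih]
    have : 1 ≤ 2 ^ n := Nat.one_le_two_pow
    have : (2:ℕ) ^ (n+1) = 2 ^ n * 2 := by ring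
    omega

/-- In a diregular `(2,k,+2)`-digraph every vertex is an outlier of exactly two
vertices. -/
theorem stmt_5 {V : Type*} [Fintype V] (A : V → V → Prop) (k : ℕ)
    (hgeo : Geodetic A k)
    (hdeg : ∀ w, outDeg A w = 2 ∧ inDeg A w = 2)
    (hcard : Fintype.card V = 2 ^ (k + 1) + 1)
    (w : V) :
    {u : V | w ∈ Outliers A k u}.ncard = 2 := by
  classical
  haveI : Inhabited V := ⟨w⟩
  have head?_headI : ∀ l : List V, l ≠ [] → l.head? = some l.headI := by
    intro l h; cases l with
    | nil => exact absurd rfl h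
    | cons a t => rfl
  have wne : ∀ m (l : List V), l ∈ Wset A w m → l ≠ [] := by
    rintro m l ⟨_, _, h3⟩ rfl; simp at h3
  set R : Set V := {u | DistLe A k u w} with hR
  set FU : Finset (List V) :=
    (Finset.range (k + 1)).biUnion (fun m => (Wset_finite A w m).toFinset) with hFU
  have hmemFU : ∀ l, l ∈ FU ↔ ∃ m ≤ k, l ∈ Wset A w m := by
    intro l
    simp only [hFU, Finset.mem_biUnion, Finset.mem_range, Set.Finite.mem_toFinset,
      Nat.lt_succ_iff]
  have hUd : ∀ m₁ ∈ Finset.range (k + 1), ∀ m₂ ∈ Finset.range (k + 1), m₁ ≠ m₂ →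
      Disjoint ((Wset_finite A w m₁).toFinset) ((Wset_finite A w m₂).toFinset) := by
    intro m₁ _ m₂ _ hne
    rw [Finset.disjoint_left]
    rintro l hl₁ hl₂
    rw [Set.Finite.mem_toFinset] at hl₁ hl₂
    have e₁ := hl₁.2.2
    have e₂ := hl₂.2.2
    exact hne (by omega)
  have hFUcard : FU.card = 2 ^ (k + 1) - 1 := by
    rw [hFU, Finset.card_biUnion hUd]
    have : ∀ m, ((Wset_finite A w m).toFinset).card = 2 ^ m := by
      intro m
      rw [← Set.ncard_eq_toFinset_card _ (Wset_finite A w m)]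
      exact Wset_ncard A (fun v => (hdeg v).2) w m
    simp only [this]
    exact geomsum2 (k + 1)
  have hRim : R = List.headI '' ↑FU := by
    ext u
    constructor
    · rintro ⟨m, hm, l, h1, h2, h3, h4⟩
      refine ⟨l, by rw [Finset.mem_coe, hmemFU]; exact ⟨m, hm, h2, h3, h4⟩, ?_⟩
      have hne : l ≠ [] := by rintro rfl; simp at h1
      rw [head?_headI l hne] at h1
      exact (Option.some_inj.mp h1)
    · rintro ⟨l, hl, rfl⟩
      rw [Finset.mem_coe, hmemFU] at hl
      obtain ⟨m, hm, hmem⟩ := hl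
      exact ⟨m, hm, l, head?_headI l (wne m l hmem), hmem.1, hmem.2.1, hmem.2.2⟩
  have hinj : Set.InjOn List.headI (↑FU : Set (List V)) := by
    intro l₁ h₁ l₂ h₂ heq
    rw [Finset.mem_coe, hmemFU] at h₁ h₂
    obtain ⟨m₁, hm₁, g₁, c₁, e₁⟩ := h₁
    obtain ⟨m₂, hm₂, g₂, c₂, e₂⟩ := h₂
    have n₁ : l₁ ≠ [] := wne m₁ l₁ ⟨g₁, c₁, e₁⟩
    have n₂ : l₂ ≠ [] := wne m₂ l₂ ⟨g₂, c₂, e₂⟩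
    exact hgeo l₁.headI w l₁ l₂
      ⟨head?_headI l₁ n₁, g₁, c₁, by omega⟩
      ⟨by rw [head?_headI l₂ n₂, heq], g₂, c₂, by omega⟩
  have hRcard : R.ncard = 2 ^ (k + 1) - 1 := by
    rw [hRim, Set.ncard_image_of_injOn hinj, Set.ncard_coe_finset, hFUcard]
  have hOut : {u : V | w ∈ Outliers A k u} = Rᶜ := by
    ext u
    simp [Outliers, hR]
  have hsum := Set.ncard_add_ncard_compl R
  rw [Nat.card_eq_fintype_card, hcard] at hsum
  have hpos : 1 ≤ 2 ^ (k + 1) := Nat.one_le_two_pow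
  rw [hOut]
  omega
end

section
/- Let G be a diregular (2,k,+2)-digraph with k ≥ 2 and let u, v be distinct vertices with N⁺(u) = N⁺(v) = {u₁, u₂}. Then v ∈ O(u) and u ∈ O(v); moreover u₁ ∈ O(u₂) and u₂ ∈ O(u₁), and there exists a vertex x with O(u) = {v, x} and O(v) = {u, x}. -/
/-!
Since `u` and `v` have the same out-neighbours, `T_k(u) = {u} ∪ S` and `T_k(v) = {v} ∪ S` with
`S = T_{k-1}(u₁) ∪ T_{k-1}(u₂)`. Geodecity makes this union disjoint and gives the Moore count
`|T_j(w)| = 2^{j+1} - 1`, so `S` misses exactly three vertices `u, v, x`; hence `O(u) = {v, x}`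
and `O(v) = {u, x}`. The in-neighbours of `u₂` are `u` and `v`, so prefixing the arc `u → u₁` to
a walk of length at most `k` from `u₁` to `u₂` would produce either a short cycle through `u` or
a walk of length at most `k` from `u` to `v`.
-/

open scoped Classical

section

variable {V : Type*} {A : V → V → Prop} {k j m m' n : ℕ} {u v w a b : V}

theorem hasWalkLen_zero : HasWalkLen A 0 u v ↔ u = v := by
  constructor
  · rintro ⟨l, hhead, hlast, -, hlen⟩
    obtain ⟨x, rfl⟩ := List.length_eq_one_iff.mp hlen
    simp_all
  · rintro rfl
    exact ⟨[u], rfl, rfl, List.isChain_singleton u, rfl⟩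

theorem hasWalkLen_succ : HasWalkLen A (n + 1) u v ↔ ∃ w, A u w ∧ HasWalkLen A n w v := by
  constructor
  · rintro ⟨_ | ⟨x, _ | ⟨w, t⟩⟩, hhead, hlast, hchain, hlen⟩
    · simp at hhead
    · simp at hlen
    obtain rfl : x = u := by simpa using hhead
    rw [List.getLast?_cons_cons] at hlast
    obtain ⟨huw, hchain⟩ := List.isChain_cons_cons.mp hchain
    exact ⟨w, huw, w :: t, rfl, hlast, hchain, by simpa using hlen⟩
  · rintro ⟨w, huw, _ | ⟨x, t⟩, hhead, hlast, hchain, hlen⟩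
    · simp at hhead
    obtain rfl : x = w := by simpa using hhead
    refine ⟨u :: x :: t, rfl, ?_, List.isChain_cons_cons.mpr ⟨huw, hchain⟩,
      by simpa using hlen⟩
    rwa [List.getLast?_cons_cons]

theorem HasWalkLen.cons (huw : A u w) (h : HasWalkLen A n w v) : HasWalkLen A (n + 1) u v :=
  hasWalkLen_succ.mpr ⟨w, huw, h⟩

theorem hasWalkLen_succ' : HasWalkLen A (n + 1) u v ↔ ∃ w, HasWalkLen A n u w ∧ A w v := by
  induction n generalizing u with
  | zero => simp [hasWalkLen_succ, hasWalkLen_zero]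
  | succ n ih =>
    rw [hasWalkLen_succ]
    constructor
    · rintro ⟨w, huw, h⟩
      obtain ⟨y, hy, hyv⟩ := ih.mp h
      exact ⟨y, hy.cons huw, hyv⟩
    · rintro ⟨y, hy, hyv⟩
      obtain ⟨w, huw, hw⟩ := hasWalkLen_succ.mp hy
      exact ⟨w, huw, ih.mpr ⟨y, hw, hyv⟩⟩

theorem Outliers_eq_compl_Tset : Outliers A k u = (Tset A k u)ᶜ := rfl

theorem adj_iff_of_Nplus_eq_pair (h : Nplus A w = {a, b}) (c : V) : A w c ↔ c = a ∨ c = b :=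
  Set.ext_iff.mp h c

theorem adj_of_Nplus_eq_pair (h : Nplus A w = {a, b}) : A w a ∧ A w b :=
  ⟨(adj_iff_of_Nplus_eq_pair h a).mpr (Or.inl rfl),
    (adj_iff_of_Nplus_eq_pair h b).mpr (Or.inr rfl)⟩

theorem Tset_succ_of_Nplus_eq_pair (h : Nplus A w = {a, b}) :
    Tset A (j + 1) w = insert w (Tset A j a ∪ Tset A j b) := by
  have hN := adj_iff_of_Nplus_eq_pair h
  ext z
  simp only [Tset, DistLe, Set.mem_insert_iff, Set.mem_union, Set.mem_ofPred_eq]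
  constructor
  · rintro ⟨_ | m, hm, hwalk⟩
    · exact Or.inl (hasWalkLen_zero.mp hwalk).symm
    obtain ⟨c, hwc, hc⟩ := hasWalkLen_succ.mp hwalk
    rcases (hN c).mp hwc with rfl | rfl
    exacts [Or.inr (Or.inl ⟨m, by omega, hc⟩), Or.inr (Or.inr ⟨m, by omega, hc⟩)]
  · rintro (rfl | ⟨m, hm, hc⟩ | ⟨m, hm, hc⟩)
    · exact ⟨0, by omega, hasWalkLen_zero.mpr rfl⟩
    · exact ⟨m + 1, by omega, hc.cons ((hN a).mpr (Or.inl rfl))⟩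
    · exact ⟨m + 1, by omega, hc.cons ((hN b).mpr (Or.inr rfl))⟩

theorem Set.exists_eq_insert_insert_of_ncard_eq_three {α : Type*} {s : Set α} {a b : α}
    (hs : s.ncard = 3) (ha : a ∈ s) (hb : b ∈ s) (hab : a ≠ b) :
    ∃ c, c ≠ a ∧ c ≠ b ∧ s = {a, b, c} := by
  have hsub : {a, b} ⊆ s := Set.insert_subset ha (Set.singleton_subset_iff.mpr hb)
  have hrest : (s \ {a, b}).ncard = 1 := by
    rw [Set.ncard_sdiff hsub, hs, Set.ncard_pair hab]
  obtain ⟨c, hc⟩ := Set.ncard_eq_one.mp hrest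
  have hcs : c ∈ s \ {a, b} := hc ▸ rfl
  refine ⟨c, fun h => hcs.2 (Or.inl h), fun h => hcs.2 (Or.inr h), ?_⟩
  rw [← Set.union_sdiff_cancel hsub, hc, Set.insert_union, Set.singleton_union]

namespace Geodetic

theorem eq_of_hasWalkLen (hgeo : Geodetic A k) (h : HasWalkLen A m u v)
    (h' : HasWalkLen A m' u v) (hm : m ≤ k) (hm' : m' ≤ k) : m = m' := by
  obtain ⟨l, hhead, hlast, hchain, hlen⟩ := h
  obtain ⟨l', hhead', hlast', hchain', hlen'⟩ := h'
  obtain rfl :=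
    hgeo u v l l' ⟨hhead, hlast, hchain, by omega⟩ ⟨hhead', hlast', hchain', by omega⟩
  omega

theorem not_hasWalkLen_self (hgeo : Geodetic A k) (hm : 0 < m) (hmk : m ≤ k) :
    ¬ HasWalkLen A m w w := fun h =>
  hm.ne' (hgeo.eq_of_hasWalkLen h (hasWalkLen_zero.mpr rfl) hmk k.zero_le)

theorem eq_of_adj_of_hasWalkLen (hgeo : Geodetic A k) (ha : A w a) (hb : A w b)
    (hav : HasWalkLen A m a v) (hbv : HasWalkLen A m' b v) (hm : m + 1 ≤ k) (hm' : m' + 1 ≤ k) :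
    a = b := by
  obtain ⟨_ | ⟨a', t⟩, hhead, hlast, hchain, hlen⟩ := hav
  · simp at hhead
  obtain ⟨_ | ⟨b', t'⟩, hhead', hlast', hchain', hlen'⟩ := hbv
  · simp at hhead'
  obtain rfl : a' = a := by simpa using hhead
  obtain rfl : b' = b := by simpa using hhead'
  have := hgeo w v (w :: a' :: t) (w :: b' :: t')
    ⟨rfl, by rwa [List.getLast?_cons_cons], List.isChain_cons_cons.mpr ⟨ha, hchain⟩,
      by simp only [List.length_cons] at hlen ⊢; omega⟩
    ⟨rfl, by rwa [List.getLast?_cons_cons], List.isChain_cons_cons.mpr ⟨hb, hchain'⟩,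
      by simp only [List.length_cons] at hlen' ⊢; omega⟩
  simp_all

theorem notMem_Tset_of_adj (hgeo : Geodetic A k) (ha : A w a) (hj : j + 1 ≤ k) :
    w ∉ Tset A j a :=
  fun ⟨_, hm, hwalk⟩ => hgeo.not_hasWalkLen_self (by omega) (by omega) (hwalk.cons ha)

theorem disjoint_Tset_of_adj (hgeo : Geodetic A k) (ha : A w a) (hb : A w b) (hab : a ≠ b)
    (hj : j + 1 ≤ k) : Disjoint (Tset A j a) (Tset A j b) :=
  Set.disjoint_left.mpr fun _ ⟨_, hm, hav⟩ ⟨_, hm', hbv⟩ =>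
    hab (hgeo.eq_of_adj_of_hasWalkLen ha hb hav hbv (by omega) (by omega))

theorem ncard_Tset [Finite V] (hgeo : Geodetic A k) (hdeg : ∀ w, outDeg A w = 2) (hj : j ≤ k)
    (w : V) : (Tset A j w).ncard = 2 ^ (j + 1) - 1 := by
  induction j generalizing w with
  | zero => simp [Tset, DistLe, hasWalkLen_zero]
  | succ j ih =>
    obtain ⟨a, b, hab, hN⟩ := Set.ncard_eq_two.mp (hdeg w)
    obtain ⟨ha, hb⟩ := adj_of_Nplus_eq_pair hN
    have hw : w ∉ Tset A j a ∪ Tset A j b := by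
      rintro (h | h)
      exacts [hgeo.notMem_Tset_of_adj ha hj h, hgeo.notMem_Tset_of_adj hb hj h]
    rw [Tset_succ_of_Nplus_eq_pair hN, Set.ncard_insert_of_notMem hw,
      Set.ncard_union_eq (hgeo.disjoint_Tset_of_adj ha hb hab hj), ih (by omega), ih (by omega)]
    have := Nat.one_le_two_pow (n := j + 1)
    rw [pow_succ]
    omega

theorem not_distLe_of_predecessors_subset (hgeo : Geodetic A k) (hab : a ≠ b)
    (hwa : A w a) (hin : {y | A y b} ⊆ {w, v}) (hwv : ¬ DistLe A k w v) : ¬ DistLe A k a b := by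
  rintro ⟨_ | m, hm, hwalk⟩
  · exact hab (hasWalkLen_zero.mp hwalk)
  obtain ⟨y, hay, hyb⟩ := hasWalkLen_succ'.mp hwalk
  rcases hin hyb with rfl | rfl
  · exact hgeo.not_hasWalkLen_self m.succ_pos hm (hay.cons hwa)
  · exact hwv ⟨m + 1, hm, hay.cons hwa⟩

theorem exists_outliers_eq_pair_of_Nplus_eq [Fintype V] (hgeo : Geodetic A (j + 1))
    (hdeg : ∀ w, outDeg A w = 2) (hcard : Fintype.card V = 2 ^ (j + 1 + 1) + 1)
    (huv : u ≠ v) (hab : a ≠ b) (hu : Nplus A u = {a, b}) (hv : Nplus A v = {a, b}) :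
    ∃ x, Outliers A (j + 1) u = {v, x} ∧ Outliers A (j + 1) v = {u, x} := by
  set S := Tset A j a ∪ Tset A j b
  have hnotin {w} (hw : Nplus A w = {a, b}) : w ∉ S := by
    rintro (h | h)
    exacts [hgeo.notMem_Tset_of_adj (adj_of_Nplus_eq_pair hw).1 le_rfl h,
      hgeo.notMem_Tset_of_adj (adj_of_Nplus_eq_pair hw).2 le_rfl h]
  have hS : S.ncard = 2 * (2 ^ (j + 1) - 1) := by
    obtain ⟨hua, hub⟩ := adj_of_Nplus_eq_pair hu
    rw [Set.ncard_union_eq (hgeo.disjoint_Tset_of_adj hua hub hab le_rfl),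
      hgeo.ncard_Tset hdeg (by omega), hgeo.ncard_Tset hdeg (by omega), two_mul]
  have hSc : Sᶜ.ncard = 3 := by
    have hsum := Set.ncard_add_ncard_compl S
    have := Nat.one_le_two_pow (n := j + 1)
    rw [Nat.card_eq_fintype_card, hcard, hS, pow_succ] at hsum
    omega
  obtain ⟨x, hxu, hxv, hx⟩ :=
    Set.exists_eq_insert_insert_of_ncard_eq_three hSc (hnotin hu) (hnotin hv) huv
  have hO {w} (hw : Nplus A w = {a, b}) : Outliers A (j + 1) w = Sᶜ \ {w} := by
    ext z
    simp [Outliers_eq_compl_Tset, Tset_succ_of_Nplus_eq_pair hw, S, and_comm]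
  refine ⟨x, ?_, ?_⟩
  · rw [hO hu, hx, Set.insert_sdiff_self_of_notMem]
    simp [huv, hxu.symm]
  · rw [hO hv, hx, Set.insert_comm, Set.insert_sdiff_self_of_notMem]
    simp [huv.symm, hxv.symm]

end Geodetic

end

/-- In a diregular `(2,k,+2)`-digraph with `k ≥ 2`, if distinct vertices
`u, v` satisfy `N⁺(u) = N⁺(v) = {u₁, u₂}`, then `v ∈ O(u)`, `u ∈ O(v)`,
`u₁ ∈ O(u₂)`, `u₂ ∈ O(u₁)`, and there is a vertex `x` with
`O(u) = {v, x}` and `O(v) = {u, x}`. -/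
theorem stmt_6 {V : Type*} [Fintype V] (A : V → V → Prop) (k : ℕ) (hk : 2 ≤ k)
    (hgeo : Geodetic A k)
    (hdeg : ∀ w, outDeg A w = 2 ∧ inDeg A w = 2)
    (hcard : Fintype.card V = 2 ^ (k + 1) + 1)
    (u v u₁ u₂ : V) (huv : u ≠ v) (h12 : u₁ ≠ u₂)
    (hu : Nplus A u = {u₁, u₂}) (hv : Nplus A v = {u₁, u₂}) :
    v ∈ Outliers A k u ∧ u ∈ Outliers A k v ∧
    u₁ ∈ Outliers A k u₂ ∧ u₂ ∈ Outliers A k u₁ ∧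
    ∃ x : V, Outliers A k u = {v, x} ∧ Outliers A k v = {u, x} := by
  obtain ⟨j, rfl⟩ : ∃ j, k = j + 1 := ⟨k - 1, by omega⟩
  obtain ⟨x, hOu, hOv⟩ :=
    hgeo.exists_outliers_eq_pair_of_Nplus_eq (fun w => (hdeg w).1) hcard huv h12 hu hv
  have hvu : v ∈ Outliers A (j + 1) u := hOu ▸ Set.mem_insert v {x}
  have hpred {c} (hc : c = u₁ ∨ c = u₂) : {y | A y c} ⊆ {u, v} := by
    have hsub : {u, v} ⊆ {y | A y c} := Set.insert_subset
      ((adj_iff_of_Nplus_eq_pair hu c).mpr hc)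
      (Set.singleton_subset_iff.mpr ((adj_iff_of_Nplus_eq_pair hv c).mpr hc))
    refine (Set.eq_of_subset_of_ncard_le hsub ?_).superset
    rw [Set.ncard_pair huv]
    exact (hdeg c).2.le
  exact ⟨hvu, hOv ▸ Set.mem_insert u {x},
    hgeo.not_distLe_of_predecessors_subset h12.symm (adj_of_Nplus_eq_pair hu).2
      (hpred (Or.inl rfl)) hvu,
    hgeo.not_distLe_of_predecessors_subset h12 (adj_of_Nplus_eq_pair hu).1
      (hpred (Or.inr rfl)) hvu,
    x, hOu, hOv⟩
end

section
/- Every diregular (2,k,+2)-digraph with k ≥ 2 contains a pair of distinct vertices u, v with exactly one common out-neighbour, i.e. |N⁺(u) ∩ N⁺(v)| = 1. -/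
open scoped Classical

lemma even_aux {α : Type*} [DecidableEq α] (σ : α → α) (h1 : Function.Involutive σ)
    (h2 : ∀ x, σ x ≠ x) :
    ∀ n (s : Finset α), s.card ≤ n → (∀ x ∈ s, σ x ∈ s) → Even s.card := by
  intro n
  induction n with
  | zero => intro s hs _; simp [Nat.le_zero.mp hs]
  | succ n ih =>
    intro s hs hcl
    rcases s.eq_empty_or_nonempty with rfl | ⟨x, hx⟩
    · simp
    · have hσx : σ x ∈ s := hcl x hx
      have hne : σ x ≠ x := h2 x
      set s' := (s.erase x).erase (σ x) with hs'
      have hcl' : ∀ y ∈ s', σ y ∈ s' := by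
        intro y hy
        simp only [hs', Finset.mem_erase] at hy ⊢
        refine ⟨?_, ?_, hcl y hy.2.2⟩
        · intro h; apply hy.2.1; rw [← h1 y, h, h1]
        · intro h; apply hy.1; rw [← h1 y, h]
      have hcard : s'.card = s.card - 2 := by
        rw [hs', Finset.card_erase_of_mem, Finset.card_erase_of_mem hx]
        · omega
        · exact Finset.mem_erase.mpr ⟨hne, hσx⟩
      have h2le : 2 ≤ s.card := by
        have := Finset.card_le_card (Finset.insert_subset hσx (Finset.singleton_subset_iff.mpr hx))
        simpa [Finset.card_insert_of_notMem, hne] using this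
      have := ih s' (by omega) hcl'
      rw [hcard] at this
      rcases this with ⟨m, hm⟩
      exact ⟨m + 1, by omega⟩

lemma even_card_of_invol {α : Type*} [Fintype α] (σ : α → α) (h1 : Function.Involutive σ)
    (h2 : ∀ x, σ x ≠ x) : Even (Fintype.card α) := by
  classical
  have := even_aux σ h1 h2 (Finset.univ.card) Finset.univ le_rfl (by simp)
  simpa [Finset.card_univ] using this

/-- Every diregular `(2,k,+2)`-digraph with `k ≥ 2` contains a pair of
distinct vertices with exactly one common out-neighbour. -/
theorem stmt_7 {V : Type*} [Fintype V] (A : V → V → Prop) (k : ℕ) (hk : 2 ≤ k)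
    (hgeo : Geodetic A k)
    (hdeg : ∀ w, outDeg A w = 2 ∧ inDeg A w = 2)
    (hcard : Fintype.card V = 2 ^ (k + 1) + 1) :
    ∃ u v : V, u ≠ v ∧ (Nplus A u ∩ Nplus A v).ncard = 1 := by
  by_contra hcon
  push_neg at hcon
  -- For each w there is a unique x ≠ w with the same in-neighbourhood.
  have key : ∀ w : V, ∃! x : V, x ≠ w ∧ {v | A v x} = {v | A v w} := by
    intro w
    obtain ⟨a, b, hab, hS⟩ := Set.ncard_eq_two.mp ((hdeg w).2)
    have haw : A a w := by
      have : a ∈ ({a, b} : Set V) := by simp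
      rw [← hS] at this; exact this
    have hbw : A b w := by
      have : b ∈ ({a, b} : Set V) := by simp
      rw [← hS] at this; exact this
    have hwmem : w ∈ Nplus A a ∩ Nplus A b := ⟨haw, hbw⟩
    have hsub : Nplus A a ∩ Nplus A b ⊆ Nplus A a := Set.inter_subset_left
    have hNa : (Nplus A a).ncard = 2 := (hdeg a).1
    have hNb : (Nplus A b).ncard = 2 := (hdeg b).1
    have hle : (Nplus A a ∩ Nplus A b).ncard ≤ 2 := by
      rw [← hNa]; exact Set.ncard_le_ncard hsub (Set.toFinite _)
    have hpos : 0 < (Nplus A a ∩ Nplus A b).ncard :=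
      (Set.ncard_pos (Set.toFinite _)).mpr ⟨w, hwmem⟩
    have hne1 : (Nplus A a ∩ Nplus A b).ncard ≠ 1 := hcon a b hab
    have h2 : (Nplus A a ∩ Nplus A b).ncard = 2 := by omega
    have heqa : Nplus A a ∩ Nplus A b = Nplus A a :=
      Set.eq_of_subset_of_ncard_le hsub (by omega) (Set.toFinite _)
    have heqb : Nplus A a ∩ Nplus A b = Nplus A b :=
      Set.eq_of_subset_of_ncard_le Set.inter_subset_right (by omega) (Set.toFinite _)
    -- Nplus A a = {w, w'}
    obtain ⟨x, y, hxy, hNaeq⟩ := Set.ncard_eq_two.mp hNa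
    have hwxy : w ∈ ({x, y} : Set V) := by rw [← hNaeq, ← heqa]; exact hwmem
    -- let w' be the other element of {x,y}
    obtain ⟨w', hw'ne, hpair⟩ : ∃ w', w' ≠ w ∧ Nplus A a = {w, w'} := by
      rw [Set.mem_insert_iff, Set.mem_singleton_iff] at hwxy
      rcases hwxy with h | h
      · exact ⟨y, by rw [h]; exact hxy.symm, by rw [hNaeq, h]⟩
      · exact ⟨x, by rw [h]; exact hxy, by rw [hNaeq, h]; exact Set.pair_comm x y⟩
    have hw'a : A a w' := by
      have : w' ∈ Nplus A a := by rw [hpair]; simp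
      exact this
    have hw'b : A b w' := by
      have : w' ∈ Nplus A b := by rw [← heqb, heqa, hpair]; simp
      exact this
    have hSw' : {v | A v w'} = {v | A v w} := by
      rw [hS]
      have hsub' : ({a, b} : Set V) ⊆ {v | A v w'} := by
        intro z hz; rcases hz with h | h <;> simp_all
      refine (Set.eq_of_subset_of_ncard_le hsub' ?_ (Set.toFinite _)).symm
      have hw2 : ({v | A v w'} : Set V).ncard = 2 := (hdeg w').2
      rw [hw2, Set.ncard_pair hab]
    refine ⟨w', ⟨hw'ne, hSw'⟩, ?_⟩
    rintro z ⟨hzne, hSz⟩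
    have hza : A a z := by
      have : a ∈ {v | A v z} := by rw [hSz, hS]; exact Set.mem_insert a {b}
      exact this
    have : z ∈ ({w, w'} : Set V) := by rw [← hpair]; exact hza
    rcases this with h | h
    · exact absurd h hzne
    · exact h
  -- build the involution
  set σ : V → V := fun w => (key w).exists.choose with hσ
  have hσspec : ∀ w, σ w ≠ w ∧ {v | A v (σ w)} = {v | A v w} := fun w => (key w).exists.choose_spec
  have hinv : Function.Involutive σ := by
    intro w
    have h1 := hσspec w
    have h2 := hσspec (σ w)
    exact (key (σ w)).unique ⟨h2.1, h2.2⟩ ⟨Ne.symm h1.1, h1.2.symm⟩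
  have heven := even_card_of_invol σ hinv fun w => (hσspec w).1
  rw [hcard] at heven
  rcases heven with ⟨m, hm⟩
  have hp : 2 ^ (k + 1) = 2 * 2 ^ k := by rw [pow_succ]; ring
  omega
end

section
/- Let G be a digraph of odd order in which every vertex has out-degree 2 and in-degree 2, and suppose every two distinct vertices have either 0 or 2 common out-neighbours. Then a contradiction follows; i.e., any such digraph has even order. -/
open scoped Classical

/-- A finset closed under a fixed-point-free involution has even cardinality. -/
lemma even_card_of_invol_aux8 {V : Type*} [DecidableEq V] (φ : V → V)
    (hinv : ∀ x, φ (φ x) = x) (hne : ∀ x, φ x ≠ x) :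
    ∀ s : Finset V, (∀ x ∈ s, φ x ∈ s) → Even s.card := by
  intro s
  induction s using Finset.strongInduction with
  | _ s ih =>
    intro hcl
    rcases s.eq_empty_or_nonempty with rfl | ⟨a, ha⟩
    · simp
    · have hfa : φ a ∈ s := hcl a ha
      set t := s \ {a, φ a} with ht
      have hsub : t ⊂ s := by
        refine Finset.sdiff_ssubset ?_ (by simp)
        intro x hx; simp only [Finset.mem_insert, Finset.mem_singleton] at hx
        rcases hx with rfl | rfl <;> assumption
      have htcl : ∀ x ∈ t, φ x ∈ t := by
        intro x hx
        simp only [ht, Finset.mem_sdiff, Finset.mem_insert, Finset.mem_singleton] at hx ⊢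
        refine ⟨hcl x hx.1, ?_⟩
        push_neg at hx ⊢
        refine ⟨fun h => hx.2.2 ?_, fun h => hx.2.1 ?_⟩
        · rw [← h, hinv]
        · have := congrArg φ h; rwa [hinv, hinv] at this
      have het : Even t.card := ih t hsub htcl
      have hcard : s.card = t.card + 2 := by
        have h1 : ({a, φ a} : Finset V) ⊆ s := by
          intro x hx; simp only [Finset.mem_insert, Finset.mem_singleton] at hx
          rcases hx with rfl | rfl <;> assumption
        have h2 : ({a, φ a} : Finset V).card = 2 := by
          rw [Finset.card_insert_of_notMem (by simp [Ne.symm (hne a)]),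
            Finset.card_singleton]
        have h3 : 2 ≤ s.card := h2 ▸ Finset.card_le_card h1
        rw [ht, Finset.card_sdiff_of_subset h1, h2]
        omega
      obtain ⟨k, hk⟩ := het
      exact ⟨k + 1, by omega⟩

/-- A digraph in which every vertex has out-degree 2 and in-degree 2 and in
which any two distinct vertices have either 0 or 2 common out-neighbours has
even order; an odd order is contradictory. -/
theorem stmt_8 {V : Type*} [Fintype V] (A : V → V → Prop)
    (hdeg : ∀ w, outDeg A w = 2 ∧ inDeg A w = 2)
    (hcommon : ∀ u v : V, u ≠ v →
      (Nplus A u ∩ Nplus A v).ncard = 0 ∨ (Nplus A u ∩ Nplus A v).ncard = 2)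
    (hodd : Odd (Fintype.card V)) :
    False := by
  classical
  -- basic degree facts
  have hN2 : ∀ u, (Nplus A u).ncard = 2 := fun u => (hdeg u).1
  have hI2 : ∀ w, {x | A x w}.ncard = 2 := fun w => (hdeg w).2
  have hfin : ∀ s : Set V, s.Finite := fun s => s.toFinite
  -- if two distinct vertices have a common out-neighbour, their out-nbhds coincide
  have same_of_common : ∀ u v : V, u ≠ v → ∀ w, w ∈ Nplus A u ∩ Nplus A v →
      Nplus A u = Nplus A v := by
    intro u v huv w hw
    have hne0 : (Nplus A u ∩ Nplus A v).ncard ≠ 0 := by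
      intro h0
      have he := (Set.ncard_eq_zero (hfin _)).mp h0
      rw [he] at hw
      simp at hw
    have h2 : (Nplus A u ∩ Nplus A v).ncard = 2 := (hcommon u v huv).resolve_left hne0
    have hu : Nplus A u ∩ Nplus A v = Nplus A u :=
      Set.eq_of_subset_of_ncard_le Set.inter_subset_left (by rw [h2, hN2]) (hfin _)
    have hv : Nplus A u ∩ Nplus A v = Nplus A v :=
      Set.eq_of_subset_of_ncard_le Set.inter_subset_right (by rw [h2, hN2]) (hfin _)
    rw [← hu, hv]
  -- each vertex has a partner with identical out-neighbourhood
  have hex : ∀ u : V, ∃ v, v ≠ u ∧ Nplus A v = Nplus A u := by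
    intro u
    have : (Nplus A u).Nonempty := by
      rw [← Set.ncard_pos (hfin _), hN2]; norm_num
    obtain ⟨w, hw⟩ := this
    obtain ⟨a, b, hab, hset⟩ := Set.ncard_eq_two.mp (hI2 w)
    have hmem : u = a ∨ u = b := by
      have : u ∈ ({a, b} : Set V) := by rw [← hset]; exact hw
      simpa using this
    rcases hmem with h | h
    · have hb : A b w := by
        have : b ∈ {x | A x w} := by rw [hset]; exact Or.inr rfl
        exact this
      have hub : u ≠ b := fun e => hab (h ▸ e)
      exact ⟨b, Ne.symm hub, (same_of_common u b hub w ⟨hw, hb⟩).symm⟩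
    · have ha : A a w := by
        have : a ∈ {x | A x w} := by rw [hset]; exact Or.inl rfl
        exact this
      have hau : a ≠ u := fun e => hab (e.trans h)
      exact ⟨a, hau, same_of_common a u hau w ⟨ha, hw⟩⟩
  -- the partner is unique
  have huniq : ∀ u v w : V, v ≠ u → w ≠ u → Nplus A v = Nplus A u →
      Nplus A w = Nplus A u → v = w := by
    intro u v w hv hw hNv hNw
    by_contra hvw
    have : (Nplus A u).Nonempty := by
      rw [← Set.ncard_pos (hfin _), hN2]; norm_num
    obtain ⟨a, ha⟩ := this
    have hu' : u ∈ {x | A x a} := ha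
    have hv' : v ∈ {x | A x a} := by show A v a; have : a ∈ Nplus A v := hNv ▸ ha; exact this
    have hw' : w ∈ {x | A x a} := by show A w a; have : a ∈ Nplus A w := hNw ▸ ha; exact this
    obtain ⟨p, q, hpq, hset⟩ := Set.ncard_eq_two.mp (hI2 a)
    rw [hset] at hu' hv' hw'
    simp only [Set.mem_insert_iff, Set.mem_singleton_iff] at hu' hv' hw'
    rcases hu' with rfl | rfl <;> rcases hv' with rfl | rfl <;>
      rcases hw' with rfl | rfl <;> simp_all
  -- define the involution
  set φ : V → V := fun u => Classical.choose (hex u) with hφ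
  have hφne : ∀ u, φ u ≠ u := fun u => (Classical.choose_spec (hex u)).1
  have hφN : ∀ u, Nplus A (φ u) = Nplus A u := fun u => (Classical.choose_spec (hex u)).2
  have hφinv : ∀ u, φ (φ u) = u := by
    intro u
    refine huniq (φ u) (φ (φ u)) u (hφne (φ u)) (Ne.symm (hφne u)) (hφN (φ u)) (hφN u).symm
  have heven : Even (Fintype.card V) := by
    rw [← Finset.card_univ]
    exact even_card_of_invol_aux8 φ hφinv hφne Finset.univ (fun x _ => Finset.mem_univ _)
  exact (Nat.not_even_iff_odd.mpr hodd) heven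
end

section
/- Let G be a diregular (2,2,+2)-digraph (order 9) and let u, v be vertices with a unique common out-neighbour u₂, where N⁺(u) = {u₁, u₂} and N⁺(v) = {v₁, u₂} with u₁ ≠ v₁. If v ∉ O(u) then v ∈ N⁺(u₁), and if v₁ ∉ O(u) then v₁ ∈ N⁺(u₁). -/
open scoped Classical

/-! A vertex `w ∉ {u} ∪ N⁺(u)` within distance 2 of `u` is an out-neighbour of `u₁` or of `u₂`.
A 2-geodetic digraph has no loops, digons or transitive triangles, so the arc `v → u₂` rules out
the arcs `u₂ → v` and `u₂ → v₁`, as well as `v ∈ N⁺(u)` and `v₁ = u`. -/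

lemma HasWalkLen.eq_of_zero {V : Type*} {A : V → V → Prop} {u v : V}
    (h : HasWalkLen A 0 u v) : u = v := by
  obtain ⟨l, hhead, hlast, -, hlen⟩ := h
  obtain ⟨a, rfl⟩ := List.length_eq_one_iff.mp hlen
  simp_all

lemma HasWalkLen.arc_of_one {V : Type*} {A : V → V → Prop} {u v : V}
    (h : HasWalkLen A 1 u v) : A u v := by
  obtain ⟨l, hhead, hlast, hchain, hlen⟩ := h
  obtain ⟨a, b, rfl⟩ := List.length_eq_two.mp hlen
  simp only [List.head?_cons, List.getLast?_cons_cons, List.getLast?_singleton,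
    Option.some.injEq] at hhead hlast
  subst hhead hlast
  exact List.isChain_pair.mp hchain

lemma HasWalkLen.exists_mid_of_two {V : Type*} {A : V → V → Prop} {u v : V}
    (h : HasWalkLen A 2 u v) : ∃ x, A u x ∧ A x v := by
  obtain ⟨l, hhead, hlast, hchain, hlen⟩ := h
  obtain ⟨a, b, c, rfl⟩ := List.length_eq_three.mp hlen
  simp only [List.head?_cons, List.getLast?_cons_cons, List.getLast?_singleton,
    Option.some.injEq] at hhead hlast
  subst hhead hlast
  obtain ⟨hab, hbc⟩ := List.isChain_cons_cons.mp hchain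
  exact ⟨b, hab, List.isChain_pair.mp hbc⟩

lemma DistLe.eq_or_arc_or_path_two {V : Type*} {A : V → V → Prop} {u v : V}
    (h : DistLe A 2 u v) : u = v ∨ A u v ∨ ∃ x, A u x ∧ A x v := by
  obtain ⟨m, hm, hwalk⟩ := h
  interval_cases m
  · exact .inl hwalk.eq_of_zero
  · exact .inr (.inl hwalk.arc_of_one)
  · exact .inr (.inr hwalk.exists_mid_of_two)

namespace Geodetic

variable {V : Type*} {A : V → V → Prop} {k : ℕ}

lemma not_transitive_triangle (hgeo : Geodetic A k) (hk : 2 ≤ k) {a b c : V}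
    (hac : A a c) (hab : A a b) (hbc : A b c) : False := by
  have := hgeo a c [a, c] [a, b, c]
    ⟨rfl, rfl, List.isChain_pair.mpr hac, by simp; omega⟩
    ⟨rfl, rfl, List.isChain_cons_cons.mpr ⟨hab, List.isChain_pair.mpr hbc⟩, by simp; omega⟩
  simp at this

lemma not_digon (hgeo : Geodetic A k) (hk : 2 ≤ k) {a b : V}
    (hab : A a b) (hba : A b a) : False := by
  have := hgeo a a [a] [a, b, a]
    ⟨rfl, rfl, List.isChain_singleton a, by simp⟩
    ⟨rfl, rfl, List.isChain_cons_cons.mpr ⟨hab, List.isChain_pair.mpr hba⟩, by simp; omega⟩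
  simp at this

end Geodetic

lemma arc_of_distLe_two {V : Type*} {A : V → V → Prop} {u w u₁ u₂ : V}
    (hu : Nplus A u = {u₁, u₂}) (hdist : DistLe A 2 u w) (hne : u ≠ w)
    (hnotin : w ∉ Nplus A u) (hu₂ : ¬ A u₂ w) : A u₁ w := by
  have hmem (x : V) : A u x ↔ x = u₁ ∨ x = u₂ := Set.ext_iff.mp hu x
  rcases hdist.eq_or_arc_or_path_two with heq | harc | ⟨x, hux, hxw⟩
  · exact absurd heq hne
  · exact absurd harc hnotin
  · rcases (hmem x).mp hux with rfl | rfl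
    · exact hxw
    · exact absurd hxw hu₂

theorem stmt_9_general {V : Type*} (A : V → V → Prop)
    (hgeo : Geodetic A 2)
    (u v u₁ u₂ v₁ : V) (huv : u ≠ v)
    (hv2 : v₁ ≠ u₂) (h11 : u₁ ≠ v₁)
    (hu : Nplus A u = {u₁, u₂}) (hv : Nplus A v = {v₁, u₂}) :
    (v ∉ Outliers A 2 u → v ∈ Nplus A u₁) ∧
    (v₁ ∉ Outliers A 2 u → v₁ ∈ Nplus A u₁) := by
  have hAu (x : V) : A u x ↔ x = u₁ ∨ x = u₂ := Set.ext_iff.mp hu x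
  have huu₂ : A u u₂ := (hAu u₂).mpr (.inr rfl)
  have hvu₂ : A v u₂ := show u₂ ∈ Nplus A v by simp [hv]
  have hvv₁ : A v v₁ := show v₁ ∈ Nplus A v by simp [hv]
  constructor
  · intro hv_near
    refine arc_of_distLe_two hu (not_not.mp hv_near) huv ?_ (hgeo.not_digon le_rfl · hvu₂)
    rintro huv'
    rcases (hAu v).mp huv' with rfl | rfl
    · exact hgeo.not_transitive_triangle le_rfl huu₂ huv' hvu₂
    · exact hgeo.not_digon le_rfl hvu₂ hvu₂
  · intro hv₁_near
    refine arc_of_distLe_two hu (not_not.mp hv₁_near) ?_ ?_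
      (hgeo.not_transitive_triangle le_rfl hvv₁ hvu₂ ·)
    · rintro rfl
      exact hgeo.not_transitive_triangle le_rfl hvu₂ hvv₁ huu₂
    · intro huv₁
      rcases (hAu v₁).mp huv₁ with h | h
      · exact h11 h.symm
      · exact hv2 h

/-- In a diregular `(2,2,+2)`-digraph, for vertices `u, v` with unique common
out-neighbour `u₂` (`N⁺(u) = {u₁,u₂}`, `N⁺(v) = {v₁,u₂}`, `u₁ ≠ v₁`):
if `v ∉ O(u)` then `v ∈ N⁺(u₁)`, and if `v₁ ∉ O(u)` then `v₁ ∈ N⁺(u₁)`. -/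
theorem stmt_9 {V : Type*} [Fintype V] (A : V → V → Prop)
    (hgeo : Geodetic A 2)
    (hdeg : ∀ w, outDeg A w = 2 ∧ inDeg A w = 2)
    (hcard : Fintype.card V = 9)
    (u v u₁ u₂ v₁ : V) (huv : u ≠ v)
    (h12 : u₁ ≠ u₂) (hv2 : v₁ ≠ u₂) (h11 : u₁ ≠ v₁)
    (hu : Nplus A u = {u₁, u₂}) (hv : Nplus A v = {v₁, u₂}) :
    (v ∉ Outliers A 2 u → v ∈ Nplus A u₁) ∧
    (v₁ ∉ Outliers A 2 u → v₁ ∈ Nplus A u₁) :=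
  stmt_9_general A hgeo u v u₁ u₂ v₁ huv hv2 h11 hu hv
end

section
/- Let G be a diregular (2,2,+2)-digraph and let u, v be vertices with a unique common out-neighbour, N⁺(u) = {u₁, u₂}, N⁺(v) = {v₁, u₂}, u₁ ≠ v₁. Then O(u) ∩ {v, v₁} ≠ ∅, i.e. at least one of v, v₁ is an outlier of u. -/
open scoped Classical

/-!
Both `v` and `v₁` lying within distance 2 of `u` forces a pair of distinct short paths.
Since `v ∉ {u, u₁, u₂}` (an arc `u → v` would run parallel to `u → v → u₂`), and `u₂ → v`
would close a 2-cycle with `v → u₂`, we get `u₁ → v`. Then every way of reaching `v₁`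
within two steps from `u` duplicates a path: `v₁ = u` gives `v → u → u₂` beside `v → u₂`,
`u₁ → v₁` runs beside `u₁ → v → v₁`, and `u₂ → v₁` runs beside `v → v₁`.
-/

namespace Geodetic

variable {V : Type*} {A : V → V → Prop} {k : ℕ}

theorem not_adj_of_adj (hgeo : Geodetic A k) (hk : 2 ≤ k) {a b : V} (hab : A a b) :
    ¬ A b a := fun hba => by
  have := hgeo a a [a] [a, b, a] ⟨rfl, rfl, .singleton a, by simp⟩
    ⟨rfl, rfl, show List.IsChain A _ by simp [hab, hba], by simp; omega⟩
  simp at this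

theorem not_adj_of_adj_adj (hgeo : Geodetic A k) (hk : 2 ≤ k) {a b c : V}
    (hac : A a c) (hcb : A c b) : ¬ A a b := fun hab => by
  have := hgeo a b [a, b] [a, c, b] ⟨rfl, rfl, show List.IsChain A _ by simp [hab], by simp; omega⟩
    ⟨rfl, rfl, show List.IsChain A _ by simp [hac, hcb], by simp; omega⟩
  simp at this

end Geodetic

theorem DistLe.two_cases {V : Type*} {A : V → V → Prop} {u w : V} (h : DistLe A 2 u w) :
    w = u ∨ A u w ∨ ∃ x, A u x ∧ A x w := by
  obtain ⟨m, hm, l, hhead, hlast, hchain, hlen⟩ := h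
  replace hchain : l.IsChain A := hchain
  interval_cases m
  · rcases l with _ | ⟨a, _ | ⟨b, l⟩⟩ <;> simp_all
  · rcases l with _ | ⟨a, _ | ⟨b, _ | ⟨c, l⟩⟩⟩ <;> simp_all
  · rcases l with _ | ⟨a, _ | ⟨b, _ | ⟨c, _ | ⟨d, l⟩⟩⟩⟩ <;> simp_all
    exact Or.inr (Or.inr ⟨b, hchain⟩)

theorem stmt_10_general {V : Type*} (A : V → V → Prop)
    (hgeo : Geodetic A 2)
    (u v u₁ u₂ v₁ : V) (huv : u ≠ v)
    (hv2 : v₁ ≠ u₂) (h11 : u₁ ≠ v₁)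
    (hu : Nplus A u = {u₁, u₂}) (hv : Nplus A v = {v₁, u₂}) :
    Outliers A 2 u ∩ {v, v₁} ≠ ∅ := by
  have hAu (x : V) : A u x ↔ x = u₁ ∨ x = u₂ := by simpa [Nplus] using Set.ext_iff.1 hu x
  have hAv (x : V) : A v x ↔ x = v₁ ∨ x = u₂ := by simpa [Nplus] using Set.ext_iff.1 hv x
  have hvv₁ := (hAv v₁).2 (.inl rfl)
  have hvu₂ := (hAv u₂).2 (.inr rfl)
  have huu₂ := (hAu u₂).2 (.inr rfl)
  suffices h : DistLe A 2 u v → ¬ DistLe A 2 u v₁ by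
    by_cases hdv : DistLe A 2 u v
    · exact Set.nonempty_iff_ne_empty.1 ⟨v₁, h hdv, by simp⟩
    · exact Set.nonempty_iff_ne_empty.1 ⟨v, hdv, by simp⟩
  intro hdv hdv₁
  have hu₁v : A u₁ v := by
    rcases hdv.two_cases with h | hAuv | ⟨x, hux, hxv⟩
    · exact absurd h.symm huv
    · exact absurd huu₂ (hgeo.not_adj_of_adj_adj le_rfl hAuv hvu₂)
    · rcases (hAu x).1 hux with rfl | rfl
      · exact hxv
      · exact absurd hvu₂ (hgeo.not_adj_of_adj le_rfl hxv)
  rcases hdv₁.two_cases with rfl | huv₁ | ⟨x, hux, hxv₁⟩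
  · exact hgeo.not_adj_of_adj_adj le_rfl hvv₁ huu₂ hvu₂
  · exact ((hAu v₁).1 huv₁).elim (fun h => h11 h.symm) hv2
  · rcases (hAu x).1 hux with rfl | rfl
    · exact hgeo.not_adj_of_adj_adj le_rfl hu₁v hvv₁ hxv₁
    · exact hgeo.not_adj_of_adj_adj le_rfl hvu₂ hxv₁ hvv₁

/-- In a diregular `(2,2,+2)`-digraph, for vertices `u, v` with unique common
out-neighbour `u₂` as above, at least one of `v, v₁` is an outlier of `u`. -/
theorem stmt_10 {V : Type*} [Fintype V] (A : V → V → Prop)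
    (hgeo : Geodetic A 2)
    (hdeg : ∀ w, outDeg A w = 2 ∧ inDeg A w = 2)
    (hcard : Fintype.card V = 9)
    (u v u₁ u₂ v₁ : V) (huv : u ≠ v)
    (h12 : u₁ ≠ u₂) (hv2 : v₁ ≠ u₂) (h11 : u₁ ≠ v₁)
    (hu : Nplus A u = {u₁, u₂}) (hv : Nplus A v = {v₁, u₂}) :
    Outliers A 2 u ∩ {v, v₁} ≠ ∅ :=
  stmt_10_general A hgeo u v u₁ u₂ v₁ huv hv2 h11 hu hv
end

section
/- Let G be a diregular (2,k,+2)-digraph (k ≥ 3) with u, v having unique common out-neighbour u₂ as above. If w ∈ T(v₁) with d(v₁,w) = l and w ∈ T(u₁) with d(u₁,w) = m, then either m ≤ l or m = k−1 (i.e. w ∈ N^{k−1}(u₁)). -/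
open scoped Classical

namespace Aux

variable {V : Type*} {A : V → V → Prop}

lemma walk_zero (x : V) : HasWalkLen A 0 x x :=
  ⟨[x], rfl, rfl, List.isChain_singleton x, rfl⟩

lemma walk_zero_eq {x y : V} (h : HasWalkLen A 0 x y) : x = y := by
  obtain ⟨l, h1, h2, _, h4⟩ := h
  cases l with
  | nil => simp at h4
  | cons a t =>
    cases t with
    | nil => simp_all
    | cons b t' => simp at h4

lemma walk_cons {n : ℕ} {x y z : V} (hxy : A x y) (h : HasWalkLen A n y z) :
    HasWalkLen A (n + 1) x z := by
  obtain ⟨l, h1, h2, h3, h4⟩ := h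
  cases l with
  | nil => simp at h4
  | cons a t =>
    have ha : a = y := by simpa using h1
    subst ha
    exact ⟨x :: a :: t, rfl, by rwa [List.getLast?_cons_cons],
      List.isChain_cons_cons.mpr ⟨hxy, h3⟩, by simpa using h4⟩

lemma walk_succ {n : ℕ} {x z : V} (h : HasWalkLen A (n + 1) x z) :
    ∃ y, A x y ∧ HasWalkLen A n y z := by
  obtain ⟨l, h1, h2, h3, h4⟩ := h
  cases l with
  | nil => simp at h4
  | cons a t =>
    have ha : a = x := by simpa using h1
    subst ha
    cases t with
    | nil => simp at h4
    | cons b t' =>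
      obtain ⟨hab, hch⟩ := List.isChain_cons_cons.mp h3
      exact ⟨b, hab, ⟨b :: t', rfl, by rwa [List.getLast?_cons_cons] at h2, hch,
        by simpa using h4⟩⟩

lemma walk_append {x y z : V} :
    ∀ {m n : ℕ}, HasWalkLen A m x y → HasWalkLen A n y z → HasWalkLen A (m + n) x z := by
  intro m
  induction m generalizing x with
  | zero => intro n h1 h2; rw [walk_zero_eq h1]; simpa using h2
  | succ m ih =>
    intro n h1 h2
    obtain ⟨c, hc, h1'⟩ := walk_succ h1
    have := walk_cons hc (ih h1' h2)
    convert this using 1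
    omega


variable {V : Type*} {A : V → V → Prop} {k : ℕ}

lemma walk_len_unique (hgeo : Geodetic A k) {x z : V} {i j : ℕ} (hi : i ≤ k) (hj : j ≤ k)
    (h1 : HasWalkLen A i x z) (h2 : HasWalkLen A j x z) : i = j := by
  obtain ⟨l1, a1, b1, c1, d1⟩ := h1
  obtain ⟨l2, a2, b2, c2, d2⟩ := h2
  have := hgeo x z l1 l2 ⟨a1, b1, c1, by omega⟩ ⟨a2, b2, c2, by omega⟩
  subst this
  omega

lemma walk_second_eq (hgeo : Geodetic A k) {x y y' z : V} {i j : ℕ}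
    (hi : i + 1 ≤ k) (hj : j + 1 ≤ k)
    (hxy : A x y) (h1 : HasWalkLen A i y z) (hxy' : A x y') (h2 : HasWalkLen A j y' z) :
    y = y' := by
  obtain ⟨l1, a1, b1, c1, d1⟩ := h1
  obtain ⟨l2, a2, b2, c2, d2⟩ := h2
  cases l1 with
  | nil => simp at d1
  | cons p t1 =>
  cases l2 with
  | nil => simp at d2
  | cons q t2 =>
  have hp : p = y := by simpa using a1
  have hq : q = y' := by simpa using a2
  subst hp; subst hq
  have := hgeo x z (x :: p :: t1) (x :: q :: t2)
    ⟨rfl, by rwa [List.getLast?_cons_cons], List.isChain_cons_cons.mpr ⟨hxy, c1⟩, by simp at d1 ⊢; omega⟩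
    ⟨rfl, by rwa [List.getLast?_cons_cons], List.isChain_cons_cons.mpr ⟨hxy', c2⟩, by simp at d2 ⊢; omega⟩
  simp at this
  exact this.1


variable {V : Type*} {A : V → V → Prop} {k : ℕ}

/-- Walks of length `n` starting at `x`, as lists. -/
def Wset (A : V → V → Prop) (x : V) (n : ℕ) : Set (List V) :=
  {l | l.head? = some x ∧ l.Chain' A ∧ l.length = n + 1}

lemma Wset_finite [Finite V] (x : V) (n : ℕ) : (Wset A x n).Finite :=
  (List.finite_length_eq V (n + 1)).subset fun _ hl => hl.2.2

lemma Wset_ncard [Finite V] (hdeg : ∀ w : V, outDeg A w = 2) :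
    ∀ (n : ℕ) (x : V), (Wset A x n).ncard = 2 ^ n := by
  intro n
  induction n with
  | zero =>
    intro x
    have : Wset A x 0 = {[x]} := by
      ext l
      constructor
      · rintro ⟨h1, _, h3⟩
        cases l with
        | nil => simp at h3
        | cons a t =>
          cases t with
          | nil => simp_all
          | cons b t' => simp at h3
      · rintro rfl
        exact ⟨rfl, List.isChain_singleton x, rfl⟩
    rw [this]; simp
  | succ n ih =>
    intro x
    obtain ⟨a, b, hab, hN⟩ := Set.ncard_eq_two.mp (hdeg x)
    have hAa : A x a := by
      have : a ∈ {v | A x v} := by rw [hN]; exact Set.mem_insert a {b}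
      exact this
    have hAb : A x b := by
      have : b ∈ {v | A x v} := by rw [hN]; simp
      exact this
    have hsplit : Wset A x (n + 1) =
        (List.cons x '' Wset A a n) ∪ (List.cons x '' Wset A b n) := by
      ext l
      constructor
      · rintro ⟨h1, h2, h3⟩
        cases l with
        | nil => simp at h3
        | cons c t =>
          have hc : c = x := by simpa using h1
          subst hc
          cases t with
          | nil => simp at h3
          | cons d t' =>
            obtain ⟨hxd, hch⟩ := List.isChain_cons_cons.mp h2
            have hd : d ∈ ({a, b} : Set V) := by rw [← hN]; exact hxd
            have hmem : (d :: t') ∈ Wset A d n := ⟨rfl, hch, by simpa using h3⟩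
            rcases hd with rfl | rfl
            · exact Or.inl ⟨d :: t', hmem, rfl⟩
            · exact Or.inr ⟨d :: t', hmem, rfl⟩
      · rintro (⟨t, ⟨h1, h2, h3⟩, rfl⟩ | ⟨t, ⟨h1, h2, h3⟩, rfl⟩)
        · cases t with
          | nil => simp at h1
          | cons c t' =>
            have : c = a := by simpa using h1
            subst this
            exact ⟨rfl, List.isChain_cons_cons.mpr ⟨hAa, h2⟩, by simpa using h3⟩
        · cases t with
          | nil => simp at h1
          | cons c t' =>
            have : c = b := by simpa using h1
            subst this
            exact ⟨rfl, List.isChain_cons_cons.mpr ⟨hAb, h2⟩, by simpa using h3⟩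
    have hdisj : Disjoint (List.cons x '' Wset A a n) (List.cons x '' Wset A b n) := by
      rw [Set.disjoint_left]
      rintro l ⟨t, ⟨h1, _, _⟩, rfl⟩ ⟨t', ⟨h1', _, _⟩, heq⟩
      have ht : t' = t := by simpa using heq
      subst ht
      rw [h1] at h1'
      exact hab (by simpa using h1')
    rw [hsplit, Set.ncard_union_eq hdisj (((Wset_finite a n).image _))
      (((Wset_finite b n).image _)),
      Set.ncard_image_of_injective _ (List.cons_injective),
      Set.ncard_image_of_injective _ (List.cons_injective), ih a, ih b]
    rw [pow_succ]
    omega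

/-- Endpoints of walks of length `j` from `x`. -/
def Rset (A : V → V → Prop) (x : V) (j : ℕ) : Set V := {z | HasWalkLen A j x z}

lemma Rset_ncard [Finite V] (hgeo : Geodetic A k) (hdeg : ∀ w : V, outDeg A w = 2)
    (x : V) {j : ℕ} (hj : j ≤ k) : (Rset A x j).ncard = 2 ^ j := by
  classical
  have himg : Rset A x j = (fun l : List V => (l.getLast?).getD x) '' Wset A x j := by
    ext z
    constructor
    · rintro ⟨l, h1, h2, h3, h4⟩
      exact ⟨l, ⟨h1, h3, h4⟩, by simp [h2]⟩
    · rintro ⟨l, ⟨h1, h2, h3⟩, rfl⟩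
      have hne : l ≠ [] := by intro h; subst h; simp at h3
      obtain ⟨z', hz'⟩ := Option.isSome_iff_exists.mp (List.getLast?_isSome.mpr hne)
      exact ⟨l, h1, by simp [hz'], h2, h3⟩
  have hinj : Set.InjOn (fun l : List V => (l.getLast?).getD x) (Wset A x j) := by
    rintro l1 ⟨a1, b1, c1⟩ l2 ⟨a2, b2, c2⟩ heq
    have hne1 : l1 ≠ [] := by intro h; subst h; simp at c1
    have hne2 : l2 ≠ [] := by intro h; subst h; simp at c2
    obtain ⟨z1, hz1⟩ := Option.isSome_iff_exists.mp (List.getLast?_isSome.mpr hne1)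
    obtain ⟨z2, hz2⟩ := Option.isSome_iff_exists.mp (List.getLast?_isSome.mpr hne2)
    have : z1 = z2 := by simpa [hz1, hz2] using heq
    subst this
    exact hgeo x z1 l1 l2 ⟨a1, hz1, b1, by omega⟩ ⟨a2, hz2, b2, by omega⟩
  rw [himg, Set.ncard_image_of_injOn hinj, Wset_ncard hdeg j x]


lemma union_ncard [Finite V] (hgeo : Geodetic A k) (hdeg : ∀ w : V, outDeg A w = 2)
    (u : V) : ∀ j, j ≤ k → (⋃ i ∈ Finset.range (j + 1), Rset A u i).ncard = 2 ^ (j + 1) - 1 := by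
  intro j
  induction j with
  | zero =>
    intro _
    rw [show (⋃ i ∈ Finset.range 1, Rset A u i) = Rset A u 0 by simp]
    rw [Rset_ncard hgeo hdeg u (Nat.zero_le k)]
    norm_num
  | succ j ih =>
    intro hjk
    have hstep : (⋃ i ∈ Finset.range (j + 2), Rset A u i) =
        (⋃ i ∈ Finset.range (j + 1), Rset A u i) ∪ Rset A u (j + 1) := by
      ext z
      simp only [Set.mem_iUnion, Set.mem_union, Finset.mem_range]
      constructor
      · rintro ⟨i, hi, hz⟩
        rcases Nat.lt_or_ge i (j + 1) with h | h
        · exact Or.inl ⟨i, h, hz⟩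
        · have : i = j + 1 := by omega
          subst this; exact Or.inr hz
      · rintro (⟨i, hi, hz⟩ | hz)
        · exact ⟨i, by omega, hz⟩
        · exact ⟨j + 1, by omega, hz⟩
    have hdisj : Disjoint (⋃ i ∈ Finset.range (j + 1), Rset A u i) (Rset A u (j + 1)) := by
      rw [Set.disjoint_left]
      rintro z hz hz'
      simp only [Set.mem_iUnion, Finset.mem_range] at hz
      obtain ⟨i, hi, hzi⟩ := hz
      have := walk_len_unique hgeo (by omega : i ≤ k) hjk hzi hz'
      omega
    rw [hstep, Set.ncard_union_eq hdisj (Set.toFinite _) (Set.toFinite _),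
      ih (by omega), Rset_ncard hgeo hdeg u hjk]
    have h1 : 1 ≤ 2 ^ (j + 1) := Nat.one_le_two_pow
    have h2 : (2 : ℕ) ^ (j + 2) = 2 ^ (j + 1) + 2 ^ (j + 1) := by rw [pow_succ]; omega
    omega

lemma Tset_ncard [Finite V] (hgeo : Geodetic A k) (hdeg : ∀ w : V, outDeg A w = 2)
    (u : V) : (Tset A k u).ncard = 2 ^ (k + 1) - 1 := by
  have : Tset A k u = ⋃ i ∈ Finset.range (k + 1), Rset A u i := by
    ext z
    simp only [Tset, DistLe, Set.mem_setOf_eq, Set.mem_iUnion, Finset.mem_range]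
    constructor
    · rintro ⟨i, hi, hw⟩; exact ⟨i, by omega, hw⟩
    · rintro ⟨i, hi, hw⟩; exact ⟨i, by omega, hw⟩
  rw [this, union_ncard hgeo hdeg u k le_rfl]

lemma Outliers_ncard [Fintype V] (hgeo : Geodetic A k) (hdeg : ∀ w : V, outDeg A w = 2)
    (hcard : Fintype.card V = 2 ^ (k + 1) + 1) (u : V) : (Outliers A k u).ncard = 2 := by
  have hcompl : Outliers A k u = (Tset A k u)ᶜ := rfl
  have := Set.ncard_add_ncard_compl (Tset A k u) (Set.toFinite _) (Set.toFinite _)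
  rw [Tset_ncard hgeo hdeg u] at this
  have hnat : Nat.card V = 2 ^ (k + 1) + 1 := by rw [Nat.card_eq_fintype_card, hcard]
  rw [hnat] at this
  have h1 : 1 ≤ 2 ^ (k + 1) := Nat.one_le_two_pow
  rw [hcompl]
  omega

end Aux

/-- In a diregular `(2,k,+2)`-digraph with `k ≥ 3` and `u, v` having unique
common out-neighbour `u₂`: if `w ∈ T(v₁)` with `d(v₁,w) = l` and `w ∈ T(u₁)`
with `d(u₁,w) = m`, then `m ≤ l` or `m = k − 1`. -/
theorem stmt_14 {V : Type*} [Fintype V] (A : V → V → Prop) (k : ℕ) (hk : 3 ≤ k)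
    (hgeo : Geodetic A k)
    (hdeg : ∀ w, outDeg A w = 2 ∧ inDeg A w = 2)
    (hcard : Fintype.card V = 2 ^ (k + 1) + 1)
    (u v u₁ u₂ v₁ : V) (huv : u ≠ v)
    (h12 : u₁ ≠ u₂) (hv2 : v₁ ≠ u₂) (h11 : u₁ ≠ v₁)
    (hu : Nplus A u = {u₁, u₂}) (hv : Nplus A v = {v₁, u₂})
    (w : V) (l m : ℕ) (hl : l ≤ k - 1) (hm : m ≤ k - 1)
    (hwl : DistEq A l v₁ w) (hwm : DistEq A m u₁ w) :
    m ≤ l ∨ m = k - 1 := by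
  by_cases hml : m ≤ l
  · exact Or.inl hml
  right
  push_neg at hml
  -- now l < m; show every endpoint of a length-(k-m) walk from w is u or an outlier
  have hdeg' : ∀ w : V, outDeg A w = 2 := fun w => (hdeg w).1
  have hAvv1 : A v v₁ := by
    have : v₁ ∈ Nplus A v := by rw [hv]; exact Set.mem_insert _ _
    exact this
  have hAvu2 : A v u₂ := by
    have : u₂ ∈ Nplus A v := by rw [hv]; simp
    exact this
  have hsub : Aux.Rset A w (k - m) ⊆ insert u (Outliers A k u) := by
    intro z hz
    by_contra hzout
    rw [Set.mem_insert_iff] at hzout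
    push_neg at hzout
    obtain ⟨hzu, hzO⟩ := hzout
    rw [Outliers, Set.mem_setOf_eq] at hzO
    have hzT : DistLe A k u z := by
      by_contra h
      exact hzO h
    obtain ⟨j, hjk, hwalk⟩ := hzT
    cases j with
    | zero => exact hzu (Aux.walk_zero_eq hwalk).symm
    | succ j' =>
      obtain ⟨y, hAy, hwalk'⟩ := Aux.walk_succ hwalk
      have hy : y ∈ ({u₁, u₂} : Set V) := by rw [← hu]; exact hAy
      rcases hy with hy | hy <;> rw [hy] at hwalk'
      · -- y = u₁ : two walks from u₁ to z of lengths j' ≤ k-1 and k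
        have hw2 : HasWalkLen A (m + (k - m)) u₁ z := Aux.walk_append hwm.1 hz
        have hmk : m + (k - m) = k := by omega
        rw [hmk] at hw2
        have := Aux.walk_len_unique hgeo (by omega : j' ≤ k) le_rfl hwalk' hw2
        omega
      · -- y = u₂ : two walks from v to z, one via u₂, one via v₁
        have hw1 : HasWalkLen A (l + (k - m)) v₁ z := Aux.walk_append hwl.1 hz
        have := Aux.walk_second_eq hgeo
          (by omega : (l + (k - m)) + 1 ≤ k) (by omega : j' + 1 ≤ k)
          hAvv1 hw1 hAvu2 hwalk'
        exact hv2 this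
  have hcount : (Aux.Rset A w (k - m)).ncard = 2 ^ (k - m) :=
    Aux.Rset_ncard hgeo hdeg' w (by omega : k - m ≤ k)
  have hO : (Outliers A k u).ncard = 2 := Aux.Outliers_ncard hgeo hdeg' hcard u
  have hle : (Aux.Rset A w (k - m)).ncard ≤ (insert u (Outliers A k u)).ncard :=
    Set.ncard_le_ncard hsub (Set.toFinite _)
  have hins : (insert u (Outliers A k u)).ncard ≤ (Outliers A k u).ncard + 1 :=
    Set.ncard_insert_le _ _
  have hpow : 2 ^ (k - m) ≤ 3 := by omega
  have hkm : k - m ≤ 1 := by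
    by_contra h
    push_neg at h
    have : 2 ^ 2 ≤ 2 ^ (k - m) := Nat.pow_le_pow_right (by norm_num) (by omega)
    omega
  omega
end
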